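/- arXiv:2011.11533 — 3 statements merged into one kernel-verified Lean document; each statement's English description precedes it below -/
import Mathlib

section
/- Subprobability property of the flow of measures: if (μ, m) ∈ R, then m_t(Ō×A) ≤ 1 for Lebesgue-almost every t ∈ [0, T]. -/
/-!
Testing the Fokker–Planck constraint against `u(t, x) = ∫₀ᵗ ψ`, for continuous `0 ≤ ψ ≤ 1`,
kills the spatial part of the generator and leaves `∫₀ᵀ m_t(univ) ψ(t) dt = ∫ u dμ`. Since `μ` is
a probability measure on `[0,T] × Ō` and `u` is nondecreasing in `t`, this is at most
`u(T) = ∫₀ᵀ ψ`. Urysohn cut-offs of an interval `[c, d] ⊆ [0, T]` turn this into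
`∫_c^d m_t(univ) dt ≤ d - c`, and the Lebesgue differentiation theorem then bounds the mass by
`1` at almost every `t`.
-/

open MeasureTheory Filter Set Topology

noncomputable section

/-- Membership in `C_b^{1,2}([0,T] × closure O)`: `u` together with its partial
derivatives `ut = ∂_t u`, `ux = ∂_x u`, `uxx = ∂_xx u`, all continuous and bounded
on `[0,T] × closure O`. -/
structure IsCb12 (T : ℝ) (O : Set ℝ) (u ut ux uxx : ℝ → ℝ → ℝ) : Prop where
  cont : ContinuousOn (fun p : ℝ × ℝ => u p.1 p.2) (Set.Icc 0 T ×ˢ closure O)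
  cont_t : ContinuousOn (fun p : ℝ × ℝ => ut p.1 p.2) (Set.Icc 0 T ×ˢ closure O)
  cont_x : ContinuousOn (fun p : ℝ × ℝ => ux p.1 p.2) (Set.Icc 0 T ×ˢ closure O)
  cont_xx : ContinuousOn (fun p : ℝ × ℝ => uxx p.1 p.2) (Set.Icc 0 T ×ˢ closure O)
  deriv_t : ∀ t ∈ Set.Icc (0:ℝ) T, ∀ x ∈ closure O,
    HasDerivWithinAt (fun s => u s x) (ut t x) (Set.Icc 0 T) t
  deriv_x : ∀ t ∈ Set.Icc (0:ℝ) T, ∀ x ∈ closure O,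
    HasDerivWithinAt (fun y => u t y) (ux t x) (closure O) x
  deriv_xx : ∀ t ∈ Set.Icc (0:ℝ) T, ∀ x ∈ closure O,
    HasDerivWithinAt (fun y => ux t y) (uxx t x) (closure O) x
  bdd : ∃ C : ℝ, ∀ t ∈ Set.Icc (0:ℝ) T, ∀ x ∈ closure O,
    |u t x| ≤ C ∧ |ut t x| ≤ C ∧ |ux t x| ≤ C ∧ |uxx t x| ≤ C

/-- Membership in `V`: a flow of finite positive Borel measures on
`closure O × A`, measurable in `t`, with integrable total mass on `[0,T]`. -/
def MemV (T : ℝ) (O A : Set ℝ) (m : ℝ → Measure (ℝ × ℝ)) : Prop :=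
  (∀ t, m t Set.univ < ⊤) ∧
  (∀ t, m t ((closure O ×ˢ A)ᶜ) = 0) ∧
  (∀ B : Set (ℝ × ℝ), MeasurableSet B → Measurable fun t => m t B) ∧
  IntegrableOn (fun t => (m t Set.univ).toReal) (Set.Icc 0 T)

/-- Standing assumptions on the coefficients `b` and `σ` (single-agent case):
measurable, bounded, Lipschitz in `x` uniformly in `(t,a)`, nonnegative diffusion,
and jointly continuous in `(x,a)` on `closure O × A` for each fixed `t`. -/
def CoefAssumption (O A : Set ℝ) (b σ : ℝ → ℝ → ℝ → ℝ) : Prop :=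
  Measurable (fun q : ℝ × ℝ × ℝ => b q.1 q.2.1 q.2.2) ∧
  Measurable (fun q : ℝ × ℝ × ℝ => σ q.1 q.2.1 q.2.2) ∧
  (∃ C : ℝ, ∀ t x a, |b t x a| ≤ C ∧ |σ t x a| ≤ C) ∧
  (∀ t x a, 0 ≤ σ t x a) ∧
  (∃ K : ℝ, ∀ t a x y, |b t x a - b t y a| ≤ K * |x - y| ∧ |σ t x a - σ t y a| ≤ K * |x - y|) ∧
  (∀ t, ContinuousOn (fun p : ℝ × ℝ => b t p.1 p.2) (closure O ×ˢ A)) ∧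
  (∀ t, ContinuousOn (fun p : ℝ × ℝ => σ t p.1 p.2) (closure O ×ˢ A))

/-- Standing assumption on the initial measure: a probability measure on `O` with
`∫ ln(1 + |x|) dm₀* < ∞`. -/
def InitAssumption (O : Set ℝ) (m0 : Measure ℝ) : Prop :=
  IsProbabilityMeasure m0 ∧ m0 Oᶜ = 0 ∧ Integrable (fun x => Real.log (1 + |x|)) m0

/-- Membership in the constraint set `R`: `μ` is a probability measure on
`[0,T] × closure O`, `m ∈ V`, and the Fokker–Planck constraint holds for all
test functions in `C_b^{1,2}`. -/
def MemR (T : ℝ) (O A : Set ℝ) (b σ : ℝ → ℝ → ℝ → ℝ) (m0 : Measure ℝ)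
    (μ : Measure (ℝ × ℝ)) (m : ℝ → Measure (ℝ × ℝ)) : Prop :=
  IsProbabilityMeasure μ ∧ μ ((Set.Icc 0 T ×ˢ closure O)ᶜ) = 0 ∧ MemV T O A m ∧
  ∀ u ut ux uxx : ℝ → ℝ → ℝ, IsCb12 T O u ut ux uxx →
    ∫ p, u p.1 p.2 ∂μ
      = (∫ x, u 0 x ∂m0)
        + ∫ t in Set.Icc 0 T,
            (∫ p, (ut t p.1 + (b t p.1 p.2 * ux t p.1 + σ t p.1 p.2 ^ 2 / 2 * uxx t p.1)) ∂(m t))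

/-- Weak convergence of (finite) measures on `[0,T] × closure O` (tested against
bounded continuous functions). -/
def WeakConv (μn : ℕ → Measure (ℝ × ℝ)) (μ : Measure (ℝ × ℝ)) : Prop :=
  ∀ h : ℝ × ℝ → ℝ, Continuous h → (∃ C : ℝ, ∀ p, |h p| ≤ C) →
    Tendsto (fun n => ∫ p, h p ∂(μn n)) atTop (nhds (∫ p, h p ∂μ))

/-- Convergence `mⁿ → m` in `V`: weak convergence of the associated finite
measures `m_tⁿ(dx,da)dt` on `[0,T] × closure O × A`. -/
def ConvV (T : ℝ) (mn : ℕ → ℝ → Measure (ℝ × ℝ)) (m : ℝ → Measure (ℝ × ℝ)) : Prop :=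
  ∀ h : ℝ → ℝ × ℝ → ℝ, Continuous (fun q : ℝ × ℝ × ℝ => h q.1 q.2) →
    (∃ C : ℝ, ∀ t p, |h t p| ≤ C) →
    Tendsto (fun n => ∫ t in Set.Icc 0 T, (∫ p, h t p ∂(mn n t))) atTop
      (nhds (∫ t in Set.Icc 0 T, (∫ p, h t p ∂(m t))))

/-- The linear-programming reward functional
`Γ(μ, m) = ∫₀^T ∫ f(t,x,a) m_t(dx,da) dt + ∫ g(t,x) μ(dt,dx)`. -/
def LPGamma (T : ℝ) (f : ℝ → ℝ → ℝ → ℝ) (g : ℝ → ℝ → ℝ)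
    (μ : Measure (ℝ × ℝ)) (m : ℝ → Measure (ℝ × ℝ)) : ℝ :=
  (∫ t in Set.Icc 0 T, ∫ p, f t p.1 p.2 ∂(m t)) + ∫ p, g p.1 p.2 ∂μ

/-- Standing assumptions on the reward functions `f` and `g`: `f` measurable,
bounded, upper semicontinuous in `(x,a)` for each `t`; `g` upper semicontinuous
and bounded from above. -/
def RewardAssumption (T : ℝ) (O A : Set ℝ) (f : ℝ → ℝ → ℝ → ℝ) (g : ℝ → ℝ → ℝ) : Prop :=
  Measurable (fun q : ℝ × ℝ × ℝ => f q.1 q.2.1 q.2.2) ∧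
  (∃ C : ℝ, ∀ t x a, |f t x a| ≤ C) ∧
  (∀ t, UpperSemicontinuousOn (fun p : ℝ × ℝ => f t p.1 p.2) (closure O ×ˢ A)) ∧
  UpperSemicontinuousOn (fun p : ℝ × ℝ => g p.1 p.2) (Set.Icc 0 T ×ˢ closure O) ∧
  (∃ C : ℝ, ∀ t x, g t x ≤ C)

theorem ae_le_of_setIntegral_Icc_le {f : ℝ → ℝ} {a b K : ℝ} (hf : IntegrableOn f (Icc a b))
    (hbound : ∀ c d, a ≤ c → c < d → d ≤ b → ∫ t in Icc c d, f t ≤ K * (d - c)) :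
    ∀ᵐ t ∂volume.restrict (Icc a b), f t ≤ K := by
  have hdiff := IsUnifLocDoublingMeasure.ae_tendsto_average volume
    (hf.integrable_indicator measurableSet_Icc).locallyIntegrable 1
  have hIoo : ∀ᵐ t ∂volume.restrict (Icc a b), t ∈ Ioo a b := by
    rw [← Measure.restrict_congr_set Ioo_ae_eq_Icc]
    exact ae_restrict_mem measurableSet_Ioo
  filter_upwards [ae_restrict_of_ae hdiff, hIoo] with t hlim ht
  have hlim : Tendsto (fun r => ⨍ y in Metric.closedBall t r, (Icc a b).indicator f y)
      (𝓝[>] 0) (𝓝 (f t)) := by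
    rw [← indicator_of_mem (Ioo_subset_Icc_self ht) f]
    refine hlim (fun _ => t) id tendsto_id ?_
    filter_upwards [self_mem_nhdsWithin] with r (hr : 0 < r)
    simpa using hr.le
  refine le_of_tendsto hlim ?_
  filter_upwards [Ioo_mem_nhdsGT (lt_min (sub_pos.2 ht.1) (sub_pos.2 ht.2))] with r ⟨hr0, hr⟩
  have hball : Icc (t - r) (t + r) ⊆ Icc a b := by
    rw [lt_min_iff] at hr
    exact Icc_subset_Icc (by linarith) (by linarith)
  rw [setAverage_eq, Real.closedBall_eq_Icc, Real.volume_real_Icc, max_eq_left (by linarith),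
    setIntegral_congr_fun measurableSet_Icc fun y hy => indicator_of_mem (hball hy) f, smul_eq_mul,
    inv_mul_le_iff₀ (by linarith)]
  have := hbound (t - r) (t + r) (hball ⟨le_rfl, by linarith⟩).1 (by linarith)
    (hball ⟨by linarith, le_rfl⟩).2
  linarith

theorem setIntegral_Icc_le_of_forall_continuous {f : ℝ → ℝ} {a b : ℝ}
    (hf : IntegrableOn f (Icc a b)) (hf0 : 0 ≤ᵐ[volume.restrict (Icc a b)] f)
    (htest : ∀ ψ : ℝ → ℝ, Continuous ψ → (∀ t, ψ t ∈ Icc 0 1) →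
      ∫ t in Icc a b, f t * ψ t ≤ ∫ t in Icc a b, ψ t)
    {c d : ℝ} (hac : a ≤ c) (hcd : c ≤ d) (hdb : d ≤ b) :
    ∫ t in Icc c d, f t ≤ d - c := by
  refine le_of_forall_pos_le_add fun ε hε => ?_
  set U := Ioo (c - ε / 2) (d + ε / 2)
  obtain ⟨ψ, hψU, hψ1, hψ01⟩ := exists_continuous_zero_one_of_isClosed isOpen_Ioo.isClosed_compl
    isClosed_Icc (disjoint_compl_left_iff_subset.2 (Icc_subset_Ioo (by linarith) (by linarith)) :
      Disjoint Uᶜ (Icc c d))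
  have hψ_le : ∀ t, ψ t ≤ U.indicator 1 t := by
    intro t
    by_cases ht : t ∈ U
    · simpa [ht] using (hψ01 t).2
    · simp [ht, hψU ht]
  calc ∫ t in Icc c d, f t = ∫ t in Icc c d, f t * ψ t :=
        setIntegral_congr_fun measurableSet_Icc fun t ht => by simp [hψ1 ht]
    _ ≤ ∫ t in Icc a b, f t * ψ t :=
        setIntegral_mono_set (hf.mul_continuousOn ψ.continuous.continuousOn isCompact_Icc)
          (by filter_upwards [hf0] with t ht using mul_nonneg ht (hψ01 t).1)
          (Icc_subset_Icc hac hdb).eventuallyLE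
    _ ≤ ∫ t in Icc a b, ψ t := htest ψ ψ.continuous hψ01
    _ ≤ ∫ t in Icc a b, U.indicator 1 t :=
        integral_mono ψ.continuous.integrableOn_Icc
          ((integrableOn_const measure_Icc_lt_top.ne).indicator measurableSet_Ioo) hψ_le
    _ ≤ volume.real U := by
        rw [integral_indicator_one measurableSet_Ioo, measureReal_restrict_apply measurableSet_Ioo]
        exact measureReal_mono inter_subset_left measure_Ioo_lt_top.ne
    _ = d - c + ε := by
        rw [Real.volume_real_Ioo, max_eq_left (by linarith)]
        ring

theorem isCb12_primitive (T : ℝ) (O : Set ℝ) {ψ : ℝ → ℝ} (hψ : Continuous ψ) :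
    IsCb12 T O (fun t _ => ∫ s in (0:ℝ)..t, ψ s) (fun t _ => ψ t) (fun _ _ => 0)
      (fun _ _ => 0) := by
  have hΦ : Continuous fun t => ∫ s in (0:ℝ)..t, ψ s :=
    intervalIntegral.continuous_primitive hψ.intervalIntegrable 0
  obtain ⟨C₁, hC₁⟩ := (isCompact_Icc : IsCompact (Icc 0 T)).exists_bound_of_continuousOn
    hΦ.continuousOn
  obtain ⟨C₂, hC₂⟩ := (isCompact_Icc : IsCompact (Icc 0 T)).exists_bound_of_continuousOn
    hψ.continuousOn
  refine ⟨(hΦ.comp continuous_fst).continuousOn, (hψ.comp continuous_fst).continuousOn,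
    continuousOn_const, continuousOn_const,
    fun t _ _ _ => (hψ.integral_hasStrictDerivAt 0 t).hasDerivAt.hasDerivWithinAt,
    fun _ _ _ _ => hasDerivWithinAt_const _ _ _, fun _ _ _ _ => hasDerivWithinAt_const _ _ _,
    max (max C₁ C₂) 0, fun t ht x _ => ⟨?_, ?_, ?_, ?_⟩⟩
  · exact ((hC₁ t ht).trans (le_max_left _ _)).trans (le_max_left _ _)
  · exact ((hC₂ t ht).trans (le_max_right _ _)).trans (le_max_left _ _)
  all_goals simp

theorem MemR.setIntegral_mass_mul_le {T : ℝ} {O A : Set ℝ} {b σ : ℝ → ℝ → ℝ → ℝ}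
    {m0 : Measure ℝ} {μ : Measure (ℝ × ℝ)} {m : ℝ → Measure (ℝ × ℝ)}
    (hR : MemR T O A b σ m0 μ m) (hT : 0 ≤ T) {ψ : ℝ → ℝ} (hψ : Continuous ψ)
    (hψ01 : ∀ t, ψ t ∈ Icc 0 1) :
    ∫ t in Icc 0 T, (m t univ).toReal * ψ t ≤ ∫ t in Icc 0 T, ψ t := by
  obtain ⟨hμ, hμsupp, -, hFP⟩ := hR
  set Φ : ℝ → ℝ := fun t => ∫ s in (0:ℝ)..t, ψ s
  have hΦ_bound : ∀ᵐ p ∂μ, 0 ≤ Φ p.1 ∧ Φ p.1 ≤ Φ T := by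
    filter_upwards [mem_ae_iff.2 hμsupp] with p hp
    exact ⟨intervalIntegral.integral_nonneg hp.1.1 fun x _ => (hψ01 x).1,
      intervalIntegral.integral_mono_interval le_rfl hp.1.1 hp.1.2
        (ae_of_all _ fun x => (hψ01 x).1) (hψ.intervalIntegrable 0 T)⟩
  have hΦ_int : Integrable (fun p : ℝ × ℝ => Φ p.1) μ :=
    (integrable_const (Φ T)).mono'
      ((intervalIntegral.continuous_primitive hψ.intervalIntegrable 0).comp
        continuous_fst).aestronglyMeasurable
      (hΦ_bound.mono fun _ h => by rw [Real.norm_eq_abs, abs_of_nonneg h.1]; exact h.2)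
  have hFP' := hFP _ _ _ _ (isCb12_primitive T O hψ)
  simp only [mul_zero, add_zero, intervalIntegral.integral_same, integral_zero, zero_add,
    integral_const, smul_eq_mul, measureReal_def] at hFP'
  calc ∫ t in Icc 0 T, (m t univ).toReal * ψ t = ∫ p, Φ p.1 ∂μ := hFP'.symm
    _ ≤ ∫ _, Φ T ∂μ := integral_mono_ae hΦ_int (integrable_const _) (hΦ_bound.mono fun _ h => h.2)
    _ = ∫ t in Icc 0 T, ψ t := by
        rw [integral_const, probReal_univ, one_smul, integral_Icc_eq_integral_Ioc,
          ← intervalIntegral.integral_of_le hT]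

theorem subprobability_of_memR_general
    (T : ℝ) (hT : 0 < T) (O A : Set ℝ) (b σ : ℝ → ℝ → ℝ → ℝ) (m0 : Measure ℝ)
    (μ : Measure (ℝ × ℝ)) (m : ℝ → Measure (ℝ × ℝ))
    (hR : MemR T O A b σ m0 μ m) :
    ∀ᵐ t ∂(volume.restrict (Set.Icc 0 T)), m t (closure O ×ˢ A) ≤ 1 := by
  have ⟨_, _, ⟨hfin, _, _, hint⟩, _⟩ := hR
  have hmass : ∀ᵐ t ∂volume.restrict (Icc 0 T), (m t univ).toReal ≤ 1 :=
    ae_le_of_setIntegral_Icc_le hint fun c d hc hcd hd => by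
      simpa using setIntegral_Icc_le_of_forall_continuous hint
        (ae_of_all _ fun _ => ENNReal.toReal_nonneg)
        (fun ψ hψ hψ01 => hR.setIntegral_mass_mul_le hT.le hψ hψ01) hc hcd.le hd
  filter_upwards [hmass] with t ht
  calc m t (closure O ×ˢ A) ≤ m t univ := measure_mono (subset_univ _)
    _ ≤ 1 := (ENNReal.toReal_le_toReal (hfin t).ne ENNReal.one_ne_top).1 (by simpa using ht)

/-- Subprobability property of the flow of measures:
if `(μ, m) ∈ R`, then `m_t(Ō × A) ≤ 1` for Lebesgue-almost every `t ∈ [0, T]`. -/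
theorem subprobability_of_memR
    (T : ℝ) (hT : 0 < T) (O A : Set ℝ) (hO : IsOpen O) (hA : IsCompact A)
    (b σ : ℝ → ℝ → ℝ → ℝ) (hbσ : CoefAssumption O A b σ)
    (m0 : Measure ℝ) (hm0 : InitAssumption O m0)
    (μ : Measure (ℝ × ℝ)) (m : ℝ → Measure (ℝ × ℝ))
    (hR : MemR T O A b σ m0 μ m) :
    ∀ᵐ t ∂(volume.restrict (Set.Icc 0 T)), m t (closure O ×ˢ A) ≤ 1 :=
  subprobability_of_memR_general T hT O A b σ m0 μ m hR
end
end

section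
/- A bounded variation property: let h ∈ C_b^{1,2}([0,T]×Ō) and (μ, m) ∈ R. Then there exists a constant C = C(b, σ, h) > 0 such that for every ψ ∈ C¹([0,T]), ∫₀^T ψ′(t) (∫_{Ō×A} h(t,x) m_t(dx,da)) dt ≤ C‖ψ‖_∞. In particular, the function t ↦ ∫_{Ō×A} h(t,x) m_t(dx,da) belongs to L¹((0,T)) with L¹-norm at most T‖h‖_∞, and its variation V := sup{∫₀^T ψ′(t) (∫_{Ō×A} h(t,x) m_t(dx,da)) dt : ψ ∈ C_c¹((0,T)), ‖ψ‖_∞ ≤ 1} satisfies V ≤ C; hence it is of bounded variation on (0,T) with BV norm at most T‖h‖_∞ + C. -/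
/-
Testing the Fokker–Planck constraint with `u(t, x) = ψ(t) h(t, x)` gives
`∫₀ᵀ ψ' ∫ h dmₜ dt = ∫ ψ h dμ - ψ(0) ∫ h(0, ·) dm₀* - ∫₀ᵀ ψ ∫ (∂ₜ + L) h dmₜ dt`.
The first two terms on the right are at most `‖ψ‖_∞ ‖h‖_∞` because `μ` and `m₀*` are
probability measures, and the last one is at most `‖ψ‖_∞ ‖(∂ₜ + L) h‖_∞ ∫₀ᵀ mₜ(Ō × A) dt`.
Testing the constraint with `u(t, x) = t` identifies this total mass with `∫ t dμ ≤ T`, so the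
constant depends only on `T`, `b`, `σ` and `h`. Measurability of `t ↦ ∫ h dmₜ` comes from
viewing the flow as an s-finite kernel.
-/

open MeasureTheory Filter Set Topology

noncomputable section

namespace ProbabilityTheory.Kernel

variable {α β : Type*} {mα : MeasurableSpace α} {mβ : MeasurableSpace β}

/-- Split `α` according to the integer part of the total mass `κ a univ`. -/
theorem isSFiniteKernel_of_isFiniteMeasure (κ : Kernel α β) [∀ a, IsFiniteMeasure (κ a)] :
    IsSFiniteKernel κ := by
  classical
  set level : α → ℕ := fun a => ⌊(κ a univ).toReal⌋₊
  have hlevel : Measurable level := (κ.measurable_coe .univ).ennreal_toReal.nat_floor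
  let κs : ℕ → Kernel α β := fun n => piecewise (hlevel (measurableSet_singleton n)) κ 0
  have hκs (n : ℕ) : IsFiniteKernel (κs n) := by
    refine ⟨⟨n + 1, by simp, fun a => ?_⟩⟩
    by_cases ha : level a = n
    · have hlt : (κ a univ).toReal < n + 1 := ha ▸ Nat.lt_floor_add_one _
      rw [piecewise_apply, if_pos (show a ∈ level ⁻¹' {n} from ha)]
      have := (ENNReal.lt_ofReal_iff_toReal_lt (measure_ne_top _ _)).mpr hlt
      exact this.le.trans_eq (by rw [ENNReal.ofReal_add (by positivity) zero_le_one]; simp)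
    · simp [κs, piecewise_apply, ha]
  refine ⟨⟨κs, hκs, ?_⟩⟩
  ext a s hs
  rw [sum_apply' _ _ hs,
    tsum_eq_single (level a) fun n hn => by simp [κs, piecewise_apply, Ne.symm hn]]
  simp [κs, piecewise_apply]

end ProbabilityTheory.Kernel

theorem StronglyMeasurable.integral_measure_family {α β E : Type*}
    [MeasurableSpace α] [MeasurableSpace β] [NormedAddCommGroup E] [NormedSpace ℝ E]
    {m : α → Measure β} [∀ a, IsFiniteMeasure (m a)]
    (hm : ∀ s, MeasurableSet s → Measurable fun a => m a s)
    {F : α → β → E} (hF : StronglyMeasurable (Function.uncurry F)) :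
    StronglyMeasurable fun a => ∫ b, F a b ∂(m a) := by
  let κ : ProbabilityTheory.Kernel α β := ⟨m, Measure.measurable_of_measurable_coe m hm⟩
  have : ProbabilityTheory.IsSFiniteKernel κ :=
    ProbabilityTheory.Kernel.isSFiniteKernel_of_isFiniteMeasure κ
  exact hF.integral_kernel_prod_right (κ := κ)

theorem ContinuousOn.exists_measurable_eqOn {α γ : Type*} [TopologicalSpace α]
    [MeasurableSpace α] [OpensMeasurableSpace α] [TopologicalSpace γ] [MeasurableSpace γ]
    [BorelSpace γ] [Zero γ] {f : α → γ} {s : Set α} (hf : ContinuousOn f s)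
    (hs : MeasurableSet s) : ∃ g, Measurable g ∧ EqOn f g s := by
  classical
  exact ⟨s.piecewise f 0, hf.measurable_piecewise continuousOn_const hs,
    fun x hx => (s.piecewise_eq_of_mem f 0 hx).symm⟩

theorem abs_integral_le_of_measure_compl_eq_zero {α : Type*} [MeasurableSpace α]
    {ν : Measure α} [IsProbabilityMeasure ν] {s : Set α} (hs : ν sᶜ = 0) {f : α → ℝ} {K : ℝ}
    (hf : ∀ x ∈ s, |f x| ≤ K) : |∫ x, f x ∂ν| ≤ K := by
  simpa using norm_integral_le_of_norm_le_const (μ := ν) (f := f) (C := K)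
    (Filter.mem_of_superset (mem_ae_iff.mpr hs) hf)

def timeCylinder (T : ℝ) (O : Set ℝ) : Set (ℝ × ℝ × ℝ) := Icc 0 T ×ˢ (closure O ×ˢ univ)

theorem measurableSet_timeCylinder (T : ℝ) (O : Set ℝ) : MeasurableSet (timeCylinder T O) :=
  measurableSet_Icc.prod (isClosed_closure.measurableSet.prod .univ)

/-- Functions in `C_b^{1,2}` are arbitrary outside `[0,T] × Ō`, so this is the measurability
available for the integrands of the Fokker–Planck constraint. -/
def MeasurableOnCylinder (T : ℝ) (O : Set ℝ) (F : ℝ → ℝ × ℝ → ℝ) : Prop :=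
  ∃ G : ℝ × ℝ × ℝ → ℝ, Measurable G ∧ EqOn (Function.uncurry F) G (timeCylinder T O)

namespace MeasurableOnCylinder

variable {T : ℝ} {O : Set ℝ} {F G : ℝ → ℝ × ℝ → ℝ}

theorem of_measurable (hF : Measurable (Function.uncurry F)) : MeasurableOnCylinder T O F :=
  ⟨_, hF, fun _ _ => rfl⟩

theorem of_continuousOn {g : ℝ → ℝ → ℝ}
    (hg : ContinuousOn (fun q : ℝ × ℝ => g q.1 q.2) (Icc 0 T ×ˢ closure O)) :
    MeasurableOnCylinder T O fun t p => g t p.1 :=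
  (hg.comp (continuous_fst.prodMk (continuous_fst.comp continuous_snd)).continuousOn
    fun _ hq => ⟨hq.1, hq.2.1⟩).exists_measurable_eqOn (measurableSet_timeCylinder T O)

theorem add (hF : MeasurableOnCylinder T O F) (hG : MeasurableOnCylinder T O G) :
    MeasurableOnCylinder T O fun t p => F t p + G t p := by
  obtain ⟨F', hF', hFF'⟩ := hF
  obtain ⟨G', hG', hGG'⟩ := hG
  exact ⟨F' + G', hF'.add hG', fun q hq => congrArg₂ (· + ·) (hFF' hq) (hGG' hq)⟩

theorem mul (hF : MeasurableOnCylinder T O F) (hG : MeasurableOnCylinder T O G) :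
    MeasurableOnCylinder T O fun t p => F t p * G t p := by
  obtain ⟨F', hF', hFF'⟩ := hF
  obtain ⟨G', hG', hGG'⟩ := hG
  exact ⟨F' * G', hF'.mul hG', fun q hq => congrArg₂ (· * ·) (hFF' hq) (hGG' hq)⟩

end MeasurableOnCylinder

namespace MemV

variable {T : ℝ} {O A : Set ℝ} {m : ℝ → Measure (ℝ × ℝ)} {F G : ℝ → ℝ × ℝ → ℝ} {K L : ℝ}

theorem isFiniteMeasure (hm : MemV T O A m) (t : ℝ) : IsFiniteMeasure (m t) := ⟨hm.1 t⟩

theorem measurable_apply (hm : MemV T O A m) {s : Set (ℝ × ℝ)} (hs : MeasurableSet s) :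
    Measurable fun t => m t s :=
  hm.2.2.1 s hs

theorem integrableOn_mass (hm : MemV T O A m) :
    IntegrableOn (fun t => (m t univ).toReal) (Icc 0 T) :=
  hm.2.2.2

theorem ae_mem (hm : MemV T O A m) (t : ℝ) : ∀ᵐ p ∂(m t), p ∈ closure O ×ˢ A :=
  mem_ae_iff.mpr (hm.2.1 t)

theorem ae_abs_le (hm : MemV T O A m)
    (hK : ∀ t ∈ Icc 0 T, ∀ x ∈ closure O, ∀ a, |F t (x, a)| ≤ K) {t : ℝ} (ht : t ∈ Icc 0 T) :
    ∀ᵐ p ∂(m t), |F t p| ≤ K := by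
  filter_upwards [hm.ae_mem t] with p hp
  exact hK t ht p.1 hp.1 p.2

theorem abs_integral_le (hm : MemV T O A m)
    (hK : ∀ t ∈ Icc 0 T, ∀ x ∈ closure O, ∀ a, |F t (x, a)| ≤ K) {t : ℝ} (ht : t ∈ Icc 0 T) :
    |∫ p, F t p ∂(m t)| ≤ K * (m t univ).toReal := by
  have := hm.isFiniteMeasure t
  simpa [Measure.real] using norm_integral_le_of_norm_le_const (μ := m t) (f := F t)
    (by simpa only [Real.norm_eq_abs] using hm.ae_abs_le hK ht)

theorem integral_ae_eq (hm : MemV T O A m) {G : ℝ × ℝ × ℝ → ℝ}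
    (hFG : EqOn (Function.uncurry F) G (timeCylinder T O)) :
    (fun t => ∫ p, F t p ∂(m t))
      =ᵐ[volume.restrict (Icc 0 T)] fun t => ∫ p, G (t, p) ∂(m t) := by
  filter_upwards [ae_restrict_mem measurableSet_Icc] with t ht
  refine integral_congr_ae ?_
  filter_upwards [hm.ae_mem t] with p hp
  exact hFG (x := (t, p)) ⟨ht, hp.1, mem_univ _⟩

theorem integrable (hm : MemV T O A m) (hF : MeasurableOnCylinder T O F)
    (hK : ∀ t ∈ Icc 0 T, ∀ x ∈ closure O, ∀ a, |F t (x, a)| ≤ K) {t : ℝ} (ht : t ∈ Icc 0 T) :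
    Integrable (F t) (m t) := by
  obtain ⟨G, hG, hFG⟩ := hF
  have := hm.isFiniteMeasure t
  have hFt : AEStronglyMeasurable (F t) (m t) := by
    refine (hG.comp (measurable_prodMk_left (x := t))).aestronglyMeasurable.congr ?_
    filter_upwards [hm.ae_mem t] with p hp
    exact (hFG (x := (t, p)) ⟨ht, hp.1, mem_univ _⟩).symm
  exact (integrable_const K).mono' hFt (hm.ae_abs_le hK ht)

theorem integrableOn_integral (hm : MemV T O A m) (hF : MeasurableOnCylinder T O F)
    (hK : ∀ t ∈ Icc 0 T, ∀ x ∈ closure O, ∀ a, |F t (x, a)| ≤ K) :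
    IntegrableOn (fun t => ∫ p, F t p ∂(m t)) (Icc 0 T) := by
  obtain ⟨G, hG, hFG⟩ := hF
  have := hm.isFiniteMeasure
  have hGm : StronglyMeasurable fun t => ∫ p, G (t, p) ∂(m t) :=
    StronglyMeasurable.integral_measure_family (fun _ => hm.measurable_apply)
      (F := fun t p => G (t, p)) hG.stronglyMeasurable
  refine (hm.integrableOn_mass.const_mul K).mono'
    (hGm.aestronglyMeasurable.congr (hm.integral_ae_eq hFG).symm) ?_
  filter_upwards [ae_restrict_mem measurableSet_Icc] with t ht
  exact hm.abs_integral_le hK ht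

theorem integral_abs_integral_le (hm : MemV T O A m) (hF : MeasurableOnCylinder T O F)
    (hK : ∀ t ∈ Icc 0 T, ∀ x ∈ closure O, ∀ a, |F t (x, a)| ≤ K) :
    ∫ t in Icc 0 T, |∫ p, F t p ∂(m t)| ≤ K * ∫ t in Icc 0 T, (m t univ).toReal := by
  rw [← integral_const_mul]
  exact setIntegral_mono_on (hm.integrableOn_integral hF hK).abs (hm.integrableOn_mass.const_mul K)
    measurableSet_Icc fun t ht => hm.abs_integral_le hK ht

theorem setIntegral_integral_add (hm : MemV T O A m) (hF : MeasurableOnCylinder T O F)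
    (hFK : ∀ t ∈ Icc 0 T, ∀ x ∈ closure O, ∀ a, |F t (x, a)| ≤ K)
    (hG : MeasurableOnCylinder T O G)
    (hGL : ∀ t ∈ Icc 0 T, ∀ x ∈ closure O, ∀ a, |G t (x, a)| ≤ L) :
    ∫ t in Icc 0 T, ∫ p, (F t p + G t p) ∂(m t)
      = (∫ t in Icc 0 T, ∫ p, F t p ∂(m t)) + ∫ t in Icc 0 T, ∫ p, G t p ∂(m t) := by
  rw [← integral_add (hm.integrableOn_integral hF hFK) (hm.integrableOn_integral hG hGL)]
  exact setIntegral_congr_fun measurableSet_Icc fun t ht =>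
    integral_add (hm.integrable hF hFK ht) (hm.integrable hG hGL ht)

end MemV

namespace IsCb12

variable {T : ℝ} {O : Set ℝ} {u ut ux uxx : ℝ → ℝ → ℝ}

theorem exists_nonneg_bound (hu : IsCb12 T O u ut ux uxx) :
    ∃ C, 0 ≤ C ∧ ∀ t ∈ Icc (0:ℝ) T, ∀ x ∈ closure O,
      |u t x| ≤ C ∧ |ut t x| ≤ C ∧ |ux t x| ≤ C ∧ |uxx t x| ≤ C := by
  obtain ⟨C, hC⟩ := hu.bdd
  refine ⟨max C 0, le_max_right _ _, fun t ht x hx => ?_⟩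
  obtain ⟨h₁, h₂, h₃, h₄⟩ := hC t ht x hx
  exact ⟨le_max_of_le_left h₁, le_max_of_le_left h₂, le_max_of_le_left h₃, le_max_of_le_left h₄⟩

theorem time_mul (hu : IsCb12 T O u ut ux uxx) {ψ dψ : ℝ → ℝ}
    (hψ : ∀ t ∈ Icc (0:ℝ) T, HasDerivWithinAt ψ (dψ t) (Icc 0 T) t)
    (hdψ : ContinuousOn dψ (Icc 0 T)) :
    IsCb12 T O (fun t x => ψ t * u t x) (fun t x => dψ t * u t x + ψ t * ut t x)
      (fun t x => ψ t * ux t x) (fun t x => ψ t * uxx t x) := by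
  have hψc : ContinuousOn ψ (Icc 0 T) := fun t ht => (hψ t ht).continuousWithinAt
  have lift {f : ℝ → ℝ} (hf : ContinuousOn f (Icc 0 T)) :
      ContinuousOn (fun q : ℝ × ℝ => f q.1) (Icc 0 T ×ˢ closure O) :=
    hf.comp continuousOn_fst fun _ hq => hq.1
  obtain ⟨P, hP⟩ := isCompact_Icc.exists_bound_of_continuousOn hψc
  obtain ⟨Q, hQ⟩ := isCompact_Icc.exists_bound_of_continuousOn hdψ
  obtain ⟨C, hC0, hC⟩ := hu.exists_nonneg_bound
  refine ⟨(lift hψc).mul hu.cont, ((lift hdψ).mul hu.cont).add ((lift hψc).mul hu.cont_t),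
    (lift hψc).mul hu.cont_x, (lift hψc).mul hu.cont_xx,
    fun t ht x hx => (hψ t ht).mul (hu.deriv_t t ht x hx),
    fun t ht x hx => (hu.deriv_x t ht x hx).const_mul _,
    fun t ht x hx => (hu.deriv_xx t ht x hx).const_mul _, (P + Q) * C, fun t ht x hx => ?_⟩
  have hQ0 : 0 ≤ Q := (norm_nonneg _).trans (hQ t ht)
  have hPC : P * C ≤ (P + Q) * C := by nlinarith
  obtain ⟨h₁, h₂, h₃, h₄⟩ := hC t ht x hx
  refine ⟨(norm_mul_le_of_le (a₁ := ψ t) (hP t ht) h₁).trans hPC, ?_,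
    (norm_mul_le_of_le (a₁ := ψ t) (hP t ht) h₃).trans hPC,
    (norm_mul_le_of_le (a₁ := ψ t) (hP t ht) h₄).trans hPC⟩
  calc |dψ t * u t x + ψ t * ut t x| ≤ Q * C + P * C :=
        (abs_add_le _ _).trans (add_le_add (norm_mul_le_of_le (a₁ := dψ t) (hQ t ht) h₁)
          (norm_mul_le_of_le (a₁ := ψ t) (hP t ht) h₂))
    _ = (P + Q) * C := by ring

end IsCb12

theorem isCb12_time (T : ℝ) (O : Set ℝ) :
    IsCb12 T O (fun t _ => t) (fun _ _ => 1) (fun _ _ => 0) (fun _ _ => 0) where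
  cont := continuous_fst.continuousOn
  cont_t := continuousOn_const
  cont_x := continuousOn_const
  cont_xx := continuousOn_const
  deriv_t _ _ _ _ := hasDerivWithinAt_id _ _
  deriv_x _ _ _ _ := hasDerivWithinAt_const _ _ _
  deriv_xx _ _ _ _ := hasDerivWithinAt_const _ _ _
  bdd := ⟨max T 1, fun t ht _ _ => by simp [abs_of_nonneg ht.1, ht.2]⟩

/-- `(∂ₜ + L) u`, the integrand of the Fokker–Planck constraint in `MemR`. -/
def parabolicOp (b σ : ℝ → ℝ → ℝ → ℝ) (ut ux uxx : ℝ → ℝ → ℝ) (t : ℝ) (p : ℝ × ℝ) : ℝ :=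
  ut t p.1 + (b t p.1 p.2 * ux t p.1 + σ t p.1 p.2 ^ 2 / 2 * uxx t p.1)

section parabolicOp

variable {T B C P : ℝ} {O : Set ℝ} {b σ : ℝ → ℝ → ℝ → ℝ} {u ut ux uxx : ℝ → ℝ → ℝ}
  {ψ : ℝ → ℝ}

theorem parabolicOp_time_mul (dψ : ℝ → ℝ) (t : ℝ) (p : ℝ × ℝ) :
    parabolicOp b σ (fun t x => dψ t * u t x + ψ t * ut t x) (fun t x => ψ t * ux t x)
      (fun t x => ψ t * uxx t x) t p = dψ t * u t p.1 + ψ t * parabolicOp b σ ut ux uxx t p := by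
  unfold parabolicOp
  ring

theorem abs_parabolicOp_le (hB : ∀ t x a, |b t x a| ≤ B ∧ |σ t x a| ≤ B)
    (hC : ∀ t ∈ Icc (0:ℝ) T, ∀ x ∈ closure O,
      |u t x| ≤ C ∧ |ut t x| ≤ C ∧ |ux t x| ≤ C ∧ |uxx t x| ≤ C) :
    ∀ t ∈ Icc (0:ℝ) T, ∀ x ∈ closure O, ∀ a,
      |parabolicOp b σ ut ux uxx t (x, a)| ≤ (1 + B + B ^ 2 / 2) * C := by
  intro t ht x hx a
  obtain ⟨-, h₂, h₃, h₄⟩ := hC t ht x hx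
  obtain ⟨hb, hσ⟩ := hB t x a
  have hB0 : 0 ≤ B := (abs_nonneg _).trans hb
  have hσ2 : |σ t x a ^ 2 / 2| ≤ B ^ 2 / 2 := by
    rw [abs_div, abs_pow, abs_two]
    gcongr
  calc |parabolicOp b σ ut ux uxx t (x, a)|
      ≤ |ut t x| + (|b t x a| * |ux t x| + |σ t x a ^ 2 / 2| * |uxx t x|) := by
        unfold parabolicOp
        rw [← abs_mul, ← abs_mul]
        exact (abs_add_le _ _).trans (add_le_add_right (abs_add_le _ _) _)
    _ ≤ C + (B * C + B ^ 2 / 2 * C) := by gcongr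
    _ = (1 + B + B ^ 2 / 2) * C := by ring

theorem abs_time_mul_parabolicOp_le (hB : ∀ t x a, |b t x a| ≤ B ∧ |σ t x a| ≤ B)
    (hC : ∀ t ∈ Icc (0:ℝ) T, ∀ x ∈ closure O,
      |u t x| ≤ C ∧ |ut t x| ≤ C ∧ |ux t x| ≤ C ∧ |uxx t x| ≤ C)
    (hψ : ∀ t ∈ Icc (0:ℝ) T, |ψ t| ≤ P) :
    ∀ t ∈ Icc (0:ℝ) T, ∀ x ∈ closure O, ∀ a,
      |ψ t * parabolicOp b σ ut ux uxx t (x, a)| ≤ P * ((1 + B + B ^ 2 / 2) * C) :=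
  fun t ht x hx a =>
    norm_mul_le_of_le (a₁ := ψ t) (hψ t ht) (abs_parabolicOp_le hB hC t ht x hx a)

variable (hb : Measurable fun q : ℝ × ℝ × ℝ => b q.1 q.2.1 q.2.2)
  (hσ : Measurable fun q : ℝ × ℝ × ℝ => σ q.1 q.2.1 q.2.2)
include hb hσ

open MeasurableOnCylinder in
theorem IsCb12.measurableOnCylinder_parabolicOp (hu : IsCb12 T O u ut ux uxx) :
    MeasurableOnCylinder T O (parabolicOp b σ ut ux uxx) :=
  (of_continuousOn hu.cont_t).add
    (((of_measurable (F := fun t p => b t p.1 p.2) hb).mul (of_continuousOn hu.cont_x)).add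
      ((of_measurable (F := fun t p => σ t p.1 p.2 ^ 2 / 2) ((hσ.pow_const 2).div_const 2)).mul
        (of_continuousOn hu.cont_xx)))

theorem IsCb12.measurableOnCylinder_time_mul_parabolicOp (hu : IsCb12 T O u ut ux uxx)
    (hψ : ContinuousOn ψ (Icc 0 T)) :
    MeasurableOnCylinder T O fun t p => ψ t * parabolicOp b σ ut ux uxx t p :=
  (MeasurableOnCylinder.of_continuousOn (g := fun t _ => ψ t)
    (hψ.comp continuousOn_fst fun _ hq => hq.1)).mul (hu.measurableOnCylinder_parabolicOp hb hσ)

end parabolicOp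

theorem InitAssumption.nonempty {O : Set ℝ} {m0 : Measure ℝ} (hm0 : InitAssumption O m0) :
    O.Nonempty := by
  by_contra hO
  have := hm0.1
  simpa [not_nonempty_iff_eq_empty.mp hO] using hm0.2.1

namespace MemR

variable {T : ℝ} {O A : Set ℝ} {b σ : ℝ → ℝ → ℝ → ℝ} {m0 : Measure ℝ}
  {μ : Measure (ℝ × ℝ)} {m : ℝ → Measure (ℝ × ℝ)} {u ut ux uxx : ℝ → ℝ → ℝ}

theorem memV (hR : MemR T O A b σ m0 μ m) : MemV T O A m := hR.2.2.1

theorem fokkerPlanck (hR : MemR T O A b σ m0 μ m) (hu : IsCb12 T O u ut ux uxx) :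
    ∫ p, u p.1 p.2 ∂μ
      = (∫ x, u 0 x ∂m0) + ∫ t in Icc 0 T, ∫ p, parabolicOp b σ ut ux uxx t p ∂(m t) :=
  hR.2.2.2 u ut ux uxx hu

/-- Test the constraint with `u(t, x) = t`. -/
theorem setIntegral_mass_le (hR : MemR T O A b σ m0 μ m) :
    ∫ t in Icc 0 T, (m t univ).toReal ≤ T := by
  have := hR.1
  have hmass := hR.fokkerPlanck (isCb12_time T O)
  simp only [parabolicOp, mul_zero, add_zero, integral_zero, zero_add, integral_const,
    smul_eq_mul, mul_one] at hmass
  calc ∫ t in Icc 0 T, (m t univ).toReal = ∫ p, p.1 ∂μ := hmass.symm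
    _ ≤ |∫ p, p.1 ∂μ| := le_abs_self _
    _ ≤ T := abs_integral_le_of_measure_compl_eq_zero hR.2.1 fun p hp => by
        rw [abs_of_nonneg hp.1.1]; exact hp.1.2

section TimeMul

variable {B C : ℝ} {ψ dψ : ℝ → ℝ}
  (hb : Measurable fun q : ℝ × ℝ × ℝ => b q.1 q.2.1 q.2.2)
  (hσ : Measurable fun q : ℝ × ℝ × ℝ => σ q.1 q.2.1 q.2.2)
  (hB : ∀ t x a, |b t x a| ≤ B ∧ |σ t x a| ≤ B)
  (hu : IsCb12 T O u ut ux uxx)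
  (hC : ∀ t ∈ Icc (0:ℝ) T, ∀ x ∈ closure O,
    |u t x| ≤ C ∧ |ut t x| ≤ C ∧ |ux t x| ≤ C ∧ |uxx t x| ≤ C)
  (hψ : ∀ t ∈ Icc (0:ℝ) T, HasDerivWithinAt ψ (dψ t) (Icc 0 T) t)
  (hdψ : ContinuousOn dψ (Icc 0 T))
include hb hσ hB hu hC hψ hdψ

/-- Test the constraint with `ψ(t) u(t, x)`. -/
theorem setIntegral_deriv_mul_integral_eq (hR : MemR T O A b σ m0 μ m) :
    ∫ t in Icc 0 T, dψ t * ∫ p, u t p.1 ∂(m t)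
      = (∫ p, ψ p.1 * u p.1 p.2 ∂μ) - (∫ x, ψ 0 * u 0 x ∂m0)
        - ∫ t in Icc 0 T, ∫ p, ψ t * parabolicOp b σ ut ux uxx t p ∂(m t) := by
  have hψc : ContinuousOn ψ (Icc 0 T) := fun t ht => (hψ t ht).continuousWithinAt
  obtain ⟨P, hP⟩ := isCompact_Icc.exists_bound_of_continuousOn hψc
  obtain ⟨Q, hQ⟩ := isCompact_Icc.exists_bound_of_continuousOn hdψ
  have hF : MeasurableOnCylinder T O fun t p => dψ t * u t p.1 :=
    .of_continuousOn (g := fun t x => dψ t * u t x)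
      ((hdψ.comp continuousOn_fst fun _ hq => hq.1).mul hu.cont)
  have hFK : ∀ t ∈ Icc (0:ℝ) T, ∀ x ∈ closure O, ∀ _ : ℝ, |dψ t * u t x| ≤ Q * C :=
    fun t ht x hx _ => norm_mul_le_of_le (a₁ := dψ t) (hQ t ht) (hC t ht x hx).1
  have hFP := hR.fokkerPlanck (hu.time_mul hψ hdψ)
  simp only [parabolicOp_time_mul] at hFP
  rw [hR.memV.setIntegral_integral_add hF hFK
    (hu.measurableOnCylinder_time_mul_parabolicOp hb hσ hψc)
    (abs_time_mul_parabolicOp_le hB hC hP)] at hFP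
  simp only [integral_const_mul] at hFP ⊢
  linarith

theorem setIntegral_deriv_mul_integral_le (hR : MemR T O A b σ m0 μ m)
    [IsProbabilityMeasure m0] (hm0 : m0 Oᶜ = 0) (hT : 0 ≤ T) (hC0 : 0 ≤ C) {Cψ : ℝ}
    (hCψ : ∀ t ∈ Icc (0:ℝ) T, |ψ t| ≤ Cψ) :
    ∫ t in Icc 0 T, dψ t * ∫ p, u t p.1 ∂(m t) ≤ (2 + (1 + B + B ^ 2 / 2) * T) * C * Cψ := by
  have := hR.1
  have h0 : (0:ℝ) ∈ Icc 0 T := ⟨le_rfl, hT⟩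
  have hψc : ContinuousOn ψ (Icc 0 T) := fun t ht => (hψ t ht).continuousWithinAt
  have hCψ0 : 0 ≤ Cψ := (abs_nonneg _).trans (hCψ 0 h0)
  have hB0 : 0 ≤ B := (abs_nonneg _).trans (hB 0 0 0).1
  have hμ : |∫ p, ψ p.1 * u p.1 p.2 ∂μ| ≤ Cψ * C :=
    abs_integral_le_of_measure_compl_eq_zero hR.2.1 fun p hp =>
      norm_mul_le_of_le (a₁ := ψ p.1) (hCψ _ hp.1) (hC _ hp.1 _ hp.2).1
  have hm0' : |∫ x, ψ 0 * u 0 x ∂m0| ≤ Cψ * C :=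
    abs_integral_le_of_measure_compl_eq_zero hm0 fun x hx =>
      norm_mul_le_of_le (a₁ := ψ 0) (hCψ 0 h0) (hC 0 h0 x (subset_closure hx)).1
  have hflow : |∫ t in Icc 0 T, ∫ p, ψ t * parabolicOp b σ ut ux uxx t p ∂(m t)|
      ≤ Cψ * ((1 + B + B ^ 2 / 2) * C) * T :=
    calc _ ≤ ∫ t in Icc 0 T, |∫ p, ψ t * parabolicOp b σ ut ux uxx t p ∂(m t)| :=
          abs_integral_le_integral_abs
      _ ≤ Cψ * ((1 + B + B ^ 2 / 2) * C) * ∫ t in Icc 0 T, (m t univ).toReal :=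
          hR.memV.integral_abs_integral_le (hu.measurableOnCylinder_time_mul_parabolicOp hb hσ hψc)
            (abs_time_mul_parabolicOp_le hB hC hCψ)
      _ ≤ Cψ * ((1 + B + B ^ 2 / 2) * C) * T :=
          mul_le_mul_of_nonneg_left hR.setIntegral_mass_le (by positivity)
  rw [hR.setIntegral_deriv_mul_integral_eq hb hσ hB hu hC hψ hdψ]
  linarith [le_abs_self (∫ p, ψ p.1 * u p.1 p.2 ∂μ), neg_abs_le (∫ x, ψ 0 * u 0 x ∂m0),
    neg_abs_le (∫ t in Icc 0 T, ∫ p, ψ t * parabolicOp b σ ut ux uxx t p ∂(m t))]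

end TimeMul

end MemR

theorem bounded_variation_of_memR_general
    (T : ℝ) (hT : 0 < T) (O A : Set ℝ)
    (b σ : ℝ → ℝ → ℝ → ℝ) (hbσ : CoefAssumption O A b σ)
    (m0 : Measure ℝ) (hm0 : InitAssumption O m0)
    (h ht hx hxx : ℝ → ℝ → ℝ) (hh : IsCb12 T O h ht hx hxx)
    (μ : Measure (ℝ × ℝ)) (m : ℝ → Measure (ℝ × ℝ))
    (hR : MemR T O A b σ m0 μ m) :
    ∃ C : ℝ, 0 < C ∧
      -- the key inequality, for every ψ ∈ C¹([0,T]) with ‖ψ‖_∞ ≤ Cψ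
      (∀ ψ dψ : ℝ → ℝ,
        (∀ t ∈ Set.Icc (0:ℝ) T, HasDerivWithinAt ψ (dψ t) (Set.Icc 0 T) t) →
        ContinuousOn dψ (Set.Icc 0 T) →
        ∀ Cψ : ℝ, (∀ t ∈ Set.Icc (0:ℝ) T, |ψ t| ≤ Cψ) →
          (∫ t in Set.Icc 0 T, dψ t * (∫ p, h t p.1 ∂(m t))) ≤ C * Cψ) ∧
      -- L¹ membership and the L¹-norm bound T‖h‖_∞
      IntegrableOn (fun t => ∫ p, h t p.1 ∂(m t)) (Set.Icc 0 T) ∧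
      (∀ Ch : ℝ, (∀ t ∈ Set.Icc (0:ℝ) T, ∀ x ∈ closure O, |h t x| ≤ Ch) →
        (∫ t in Set.Icc 0 T, |∫ p, h t p.1 ∂(m t)|) ≤ T * Ch) ∧
      -- the variation over C¹ compactly supported ψ with ‖ψ‖_∞ ≤ 1 is at most C
      (∀ ψ dψ : ℝ → ℝ, (∀ t, HasDerivAt ψ (dψ t) t) → Continuous dψ →
        tsupport ψ ⊆ Set.Ioo 0 T → (∀ t, |ψ t| ≤ 1) →
          (∫ t in Set.Icc 0 T, dψ t * (∫ p, h t p.1 ∂(m t))) ≤ C) := by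
  obtain ⟨hb, hσ, ⟨B, hB⟩, -⟩ := hbσ
  obtain ⟨x₀, hx₀⟩ := hm0.nonempty
  have := hm0.1
  obtain ⟨Ch, hCh0, hCh⟩ := hh.exists_nonneg_bound
  have hB0 : 0 ≤ B := (abs_nonneg _).trans (hB 0 0 0).1
  have hhm : MeasurableOnCylinder T O fun t p => h t p.1 := .of_continuousOn hh.cont
  set K := (2 + (1 + B + B ^ 2 / 2) * T) * Ch
  have hkey (ψ dψ : ℝ → ℝ) (hψ : ∀ t ∈ Icc (0:ℝ) T, HasDerivWithinAt ψ (dψ t) (Icc 0 T) t)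
      (hdψ : ContinuousOn dψ (Icc 0 T)) (Cψ : ℝ) (hCψ : ∀ t ∈ Icc (0:ℝ) T, |ψ t| ≤ Cψ) :
      ∫ t in Icc 0 T, dψ t * ∫ p, h t p.1 ∂(m t) ≤ (K + 1) * Cψ := by
    have hCψ0 : 0 ≤ Cψ := (abs_nonneg _).trans (hCψ 0 ⟨le_rfl, hT.le⟩)
    calc _ ≤ K * Cψ :=
          hR.setIntegral_deriv_mul_integral_le hb hσ hB hh hCh hψ hdψ hm0.2.1 hT.le hCh0 hCψ
      _ ≤ (K + 1) * Cψ := by linarith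
  refine ⟨K + 1, by positivity, hkey,
    hR.memV.integrableOn_integral hhm fun t ht x hx _ => (hCh t ht x hx).1,
    fun Ch' hCh' => ?_, fun ψ dψ hψ hdψ _ hψ1 => ?_⟩
  · have hCh'0 : 0 ≤ Ch' := (abs_nonneg _).trans (hCh' 0 ⟨le_rfl, hT.le⟩ x₀ (subset_closure hx₀))
    calc _ ≤ Ch' * ∫ t in Icc 0 T, (m t univ).toReal :=
          hR.memV.integral_abs_integral_le hhm fun t ht x hx _ => hCh' t ht x hx
      _ ≤ Ch' * T := mul_le_mul_of_nonneg_left hR.setIntegral_mass_le hCh'0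
      _ = T * Ch' := mul_comm _ _
  · simpa using hkey ψ dψ (fun t _ => (hψ t).hasDerivWithinAt) hdψ.continuousOn 1 fun t _ => hψ1 t

/-- A bounded variation property: for `h ∈ C_b^{1,2}([0,T]×Ō)` and
`(μ, m) ∈ R`, there is a constant `C = C(b,σ,h) > 0` such that for every
`ψ ∈ C¹([0,T])`, `∫₀^T ψ'(t) (∫ h(t,x) m_t(dx,da)) dt ≤ C ‖ψ‖_∞`.  In particular
`t ↦ ∫ h(t,x) m_t(dx,da)` is in `L¹((0,T))` with `L¹`-norm at most `T ‖h‖_∞` and its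
variation (the supremum over `ψ ∈ C_c¹((0,T))` with `‖ψ‖_∞ ≤ 1` of `∫₀^T ψ' ·`) is at
most `C`; hence it is of bounded variation with BV norm at most `T ‖h‖_∞ + C`. -/
theorem bounded_variation_of_memR
    (T : ℝ) (hT : 0 < T) (O A : Set ℝ) (hO : IsOpen O) (hA : IsCompact A)
    (b σ : ℝ → ℝ → ℝ → ℝ) (hbσ : CoefAssumption O A b σ)
    (m0 : Measure ℝ) (hm0 : InitAssumption O m0)
    (h ht hx hxx : ℝ → ℝ → ℝ) (hh : IsCb12 T O h ht hx hxx)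
    (μ : Measure (ℝ × ℝ)) (m : ℝ → Measure (ℝ × ℝ))
    (hR : MemR T O A b σ m0 μ m) :
    ∃ C : ℝ, 0 < C ∧
      -- the key inequality, for every ψ ∈ C¹([0,T]) with ‖ψ‖_∞ ≤ Cψ
      (∀ ψ dψ : ℝ → ℝ,
        (∀ t ∈ Set.Icc (0:ℝ) T, HasDerivWithinAt ψ (dψ t) (Set.Icc 0 T) t) →
        ContinuousOn dψ (Set.Icc 0 T) →
        ∀ Cψ : ℝ, (∀ t ∈ Set.Icc (0:ℝ) T, |ψ t| ≤ Cψ) →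
          (∫ t in Set.Icc 0 T, dψ t * (∫ p, h t p.1 ∂(m t))) ≤ C * Cψ) ∧
      -- L¹ membership and the L¹-norm bound T‖h‖_∞
      IntegrableOn (fun t => ∫ p, h t p.1 ∂(m t)) (Set.Icc 0 T) ∧
      (∀ Ch : ℝ, (∀ t ∈ Set.Icc (0:ℝ) T, ∀ x ∈ closure O, |h t x| ≤ Ch) →
        (∫ t in Set.Icc 0 T, |∫ p, h t p.1 ∂(m t)|) ≤ T * Ch) ∧
      -- the variation over C¹ compactly supported ψ with ‖ψ‖_∞ ≤ 1 is at most C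
      (∀ ψ dψ : ℝ → ℝ, (∀ t, HasDerivAt ψ (dψ t) t) → Continuous dψ →
        tsupport ψ ⊆ Set.Ioo 0 T → (∀ t, |ψ t| ≤ 1) →
          (∫ t in Set.Icc 0 T, dψ t * (∫ p, h t p.1 ∂(m t))) ≤ C) :=
  bounded_variation_of_memR_general T hT O A b σ hbσ m0 hm0 h ht hx hxx hh μ m hR
end
end

section
/- Uniqueness of the Nash value for measure-independent coefficients: suppose b and σ do not depend on the measure argument, and that f and g have the form f(t,x,m,a) = f₁(t,x,a) f₂(t, ∫_{Ō×A} f₁(t,y,u) m(dy,du)) + f₃(t,x,a) and g(t,x,μ) = g₁(t,x) g₂(∫_{[0,T]×Ō} g₁(s,y) μ(ds,dy)) + g₃(t,x), where f₁, f₂, f₃, g₁, g₂, g₃ are bounded and measurable, f₂ is non-increasing in its second argument and g₂ is non-increasing. Let (μ¹, m¹) and (μ², m²) be two LP Nash equilibria. Then f₂(t, ∫ f₁(t,y,u) m¹_t(dy,du)) = f₂(t, ∫ f₁(t,y,u) m²_t(dy,du)) for Lebesgue-a.e. t ∈ [0,T], g₂(∫ g₁(s,y) μ¹(ds,dy)) =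 g₂(∫ g₁(s,y) μ²(ds,dy)), and in particular Γ[μ¹,m¹](μ¹,m¹) = Γ[μ²,m²](μ²,m²). -/
open MeasureTheory Filter Set Topology

noncomputable section

/-- The reward functional `Γ[μ̄,m̄](μ,m)` for the separable anti-monotone rewards
`f(t,x,m,a) = f₁(t,x,a) f₂(t, ∫ f₁ dm) + f₃(t,x,a)` and
`g(t,x,μ) = g₁(t,x) g₂(∫ g₁ dμ) + g₃(t,x)`. -/
def Gamma12 (T : ℝ) (f1 f3 : ℝ → ℝ → ℝ → ℝ) (f2 : ℝ → ℝ → ℝ)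
    (g1 g3 : ℝ → ℝ → ℝ) (g2 : ℝ → ℝ)
    (μbar : Measure (ℝ × ℝ)) (mbar : ℝ → Measure (ℝ × ℝ))
    (μ : Measure (ℝ × ℝ)) (m : ℝ → Measure (ℝ × ℝ)) : ℝ :=
  (∫ t in Set.Icc 0 T,
      ∫ p, (f1 t p.1 p.2 * f2 t (∫ q, f1 t q.1 q.2 ∂(mbar t)) + f3 t p.1 p.2) ∂(m t))
    + ∫ p, (g1 p.1 p.2 * g2 (∫ q, g1 q.1 q.2 ∂μbar) + g3 p.1 p.2) ∂μ

open ProbabilityTheory in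
/-- If `t ↦ m t B` is measurable for every Borel `B` and each `m t` is finite, then for any
jointly measurable bounded-in-no-way `f`, the map `t ↦ ∫ q, f (t, q) ∂(m t)` is measurable. -/
lemma flow_measurable_integral {m : ℝ → Measure (ℝ × ℝ)}
    (hfin : ∀ t, m t Set.univ < ⊤)
    (hmeas : ∀ B : Set (ℝ × ℝ), MeasurableSet B → Measurable fun t => m t B)
    {f : ℝ × (ℝ × ℝ) → ℝ} (hf : Measurable f) :
    Measurable fun t => ∫ q, f (t, q) ∂(m t) := by
  classical
  set κ : Kernel ℝ (ℝ × ℝ) := ⟨m, Measure.measurable_of_measurable_coe m hmeas⟩ with hκ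
  haveI : IsSFiniteKernel κ := by
    constructor
    refine ⟨fun n => ⟨fun t => if (m t Set.univ).toReal ∈ Set.Ico (n : ℝ) (n + 1) then m t else 0,
      ?_⟩, fun n => ?_, ?_⟩
    · apply Measure.measurable_of_measurable_coe
      intro s hs
      have h1 : Measurable fun t => (m t Set.univ).toReal :=
        (hmeas _ MeasurableSet.univ).ennreal_toReal
      have : (fun t => (if (m t Set.univ).toReal ∈ Set.Ico (n : ℝ) (n + 1) then m t else 0) s)
          = fun t => if (m t Set.univ).toReal ∈ Set.Ico (n : ℝ) (n + 1) then m t s else 0 := by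
        funext t; by_cases h : (m t Set.univ).toReal ∈ Set.Ico (n : ℝ) (n + 1) <;> simp [h]
      rw [this]
      exact Measurable.ite (h1 measurableSet_Ico) (hmeas s hs) measurable_const
    · refine ⟨ENNReal.ofReal (n + 1), ENNReal.ofReal_lt_top, fun t => ?_⟩
      by_cases h : (m t Set.univ).toReal ∈ Set.Ico (n : ℝ) (n + 1)
      · simp only [Kernel.coe_mk, h, if_pos]
        rw [← ENNReal.ofReal_toReal (hfin t).ne]
        exact ENNReal.ofReal_le_ofReal h.2.le
      · simp only [Kernel.coe_mk]; rw [if_neg h]; simp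
    · ext t s hs
      rw [Kernel.sum_apply' _ _ hs]
      have hr : 0 ≤ (m t Set.univ).toReal := ENNReal.toReal_nonneg
      have hmem : ∀ n : ℕ, (m t Set.univ).toReal ∈ Set.Ico (n : ℝ) (n + 1) ↔
          n = ⌊(m t Set.univ).toReal⌋₊ := by
        intro n
        rw [eq_comm, Nat.floor_eq_iff hr]
        simp [Set.mem_Ico]
      rw [tsum_eq_single ⌊(m t Set.univ).toReal⌋₊]
      · simp only [Kernel.coe_mk, (hmem _).2 rfl, if_pos]
        rfl
      · intro n hn
        simp only [Kernel.coe_mk]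
        rw [if_neg, Measure.coe_zero, Pi.zero_apply]
        exact fun h => hn ((hmem n).1 h)
  exact (hf.stronglyMeasurable.integral_kernel_prod_right' (κ := κ)).measurable

/-- A bounded a.e. strongly measurable function is integrable w.r.t. a finite measure. -/
lemma integrable_of_bdd {α : Type*} [MeasurableSpace α] {ν : Measure α} [IsFiniteMeasure ν]
    {h : α → ℝ} (hm : AEStronglyMeasurable h ν) {C : ℝ} (hb : ∀ p, |h p| ≤ C) :
    Integrable h ν :=
  Integrable.mono' (integrable_const C) hm
    (Filter.Eventually.of_forall fun p => by rw [Real.norm_eq_abs]; exact hb p)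

/-- Uniqueness of the Nash value for measure-independent
coefficients: with `f`, `g` of the separable form above, `f₂(t,·)` and `g₂`
non-increasing, any two LP Nash equilibria `(μ¹,m¹)`, `(μ²,m²)` satisfy
`f₂(t, ∫ f₁ dm¹_t) = f₂(t, ∫ f₁ dm²_t)` for a.e. `t`,
`g₂(∫ g₁ dμ¹) = g₂(∫ g₁ dμ²)`, and in particular the two Nash values coincide. -/
theorem nash_value_unique_measure_independent
    (T : ℝ) (hT : 0 < T) (O A : Set ℝ) (hO : IsOpen O) (hA : IsCompact A)
    (b σ : ℝ → ℝ → ℝ → ℝ) (hbσ : CoefAssumption O A b σ)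
    (m0 : Measure ℝ)
    (hm0 : IsProbabilityMeasure m0 ∧ m0 Oᶜ = 0 ∧ Integrable (fun x => x ^ 2) m0)
    (f1 f3 : ℝ → ℝ → ℝ → ℝ) (f2 : ℝ → ℝ → ℝ) (g1 g3 : ℝ → ℝ → ℝ) (g2 : ℝ → ℝ)
    (hf1 : Measurable (fun q : ℝ × ℝ × ℝ => f1 q.1 q.2.1 q.2.2) ∧ ∃ C : ℝ, ∀ t x a, |f1 t x a| ≤ C)
    (hf3 : Measurable (fun q : ℝ × ℝ × ℝ => f3 q.1 q.2.1 q.2.2) ∧ ∃ C : ℝ, ∀ t x a, |f3 t x a| ≤ C)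
    (hf2 : Measurable (fun q : ℝ × ℝ => f2 q.1 q.2) ∧ ∃ C : ℝ, ∀ t y, |f2 t y| ≤ C)
    (hf2mono : ∀ t, Antitone (f2 t))
    (hg1 : Measurable (fun q : ℝ × ℝ => g1 q.1 q.2) ∧ ∃ C : ℝ, ∀ t x, |g1 t x| ≤ C)
    (hg3 : Measurable (fun q : ℝ × ℝ => g3 q.1 q.2) ∧ ∃ C : ℝ, ∀ t x, |g3 t x| ≤ C)
    (hg2 : Measurable g2 ∧ ∃ C : ℝ, ∀ y, |g2 y| ≤ C)
    (hg2mono : Antitone g2)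
    (μ1 μ2 : Measure (ℝ × ℝ)) (m1 m2 : ℝ → Measure (ℝ × ℝ))
    -- (μ¹, m¹) is an LP Nash equilibrium
    (hN1 : MemR T O A b σ m0 μ1 m1 ∧
      ∀ (μ : Measure (ℝ × ℝ)) (m : ℝ → Measure (ℝ × ℝ)), MemR T O A b σ m0 μ m →
        Gamma12 T f1 f3 f2 g1 g3 g2 μ1 m1 μ m ≤ Gamma12 T f1 f3 f2 g1 g3 g2 μ1 m1 μ1 m1)
    -- (μ², m²) is an LP Nash equilibrium
    (hN2 : MemR T O A b σ m0 μ2 m2 ∧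
      ∀ (μ : Measure (ℝ × ℝ)) (m : ℝ → Measure (ℝ × ℝ)), MemR T O A b σ m0 μ m →
        Gamma12 T f1 f3 f2 g1 g3 g2 μ2 m2 μ m ≤ Gamma12 T f1 f3 f2 g1 g3 g2 μ2 m2 μ2 m2) :
    (∀ᵐ t ∂(volume.restrict (Set.Icc 0 T)),
        f2 t (∫ q, f1 t q.1 q.2 ∂(m1 t)) = f2 t (∫ q, f1 t q.1 q.2 ∂(m2 t))) ∧
    g2 (∫ q, g1 q.1 q.2 ∂μ1) = g2 (∫ q, g1 q.1 q.2 ∂μ2) ∧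
    Gamma12 T f1 f3 f2 g1 g3 g2 μ1 m1 μ1 m1 = Gamma12 T f1 f3 f2 g1 g3 g2 μ2 m2 μ2 m2 := by
    classical
  obtain ⟨hR1, hNash1⟩ := hN1
  obtain ⟨hR2, hNash2⟩ := hN2
  obtain ⟨hμ1p, -, hV1, -⟩ := id hR1
  obtain ⟨hμ2p, -, hV2, -⟩ := id hR2
  obtain ⟨hfin1, -, hmeasb1, hint1⟩ := id hV1
  obtain ⟨hfin2, -, hmeasb2, hint2⟩ := id hV2
  haveI := hμ1p; haveI := hμ2p
  have hf1m := hf1.1; obtain ⟨C1, hC1⟩ := hf1.2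
  have hf3m := hf3.1; obtain ⟨C3, hC3⟩ := hf3.2
  have hf2m := hf2.1; obtain ⟨C2, hC2⟩ := hf2.2
  have hg1m := hg1.1; obtain ⟨D1, hD1⟩ := hg1.2
  have hg3m := hg3.1; obtain ⟨D3, hD3⟩ := hg3.2
  have hC1nn : 0 ≤ C1 := le_trans (abs_nonneg _) (hC1 0 0 0)
  have hC3nn : 0 ≤ C3 := le_trans (abs_nonneg _) (hC3 0 0 0)
  have hmassle1 : ∀ t, (m1 t Set.univ).toReal
      ≤ (m1 t Set.univ).toReal + (m2 t Set.univ).toReal :=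
    fun t => le_add_of_nonneg_right ENNReal.toReal_nonneg
  have hmassle2 : ∀ t, (m2 t Set.univ).toReal
      ≤ (m1 t Set.univ).toReal + (m2 t Set.univ).toReal :=
    fun t => le_add_of_nonneg_left ENNReal.toReal_nonneg
  have hΦ1m : Measurable fun t => ∫ q, f1 t q.1 q.2 ∂(m1 t) :=
    flow_measurable_integral hfin1 hmeasb1 hf1m
  have hΦ2m : Measurable fun t => ∫ q, f1 t q.1 q.2 ∂(m2 t) :=
    flow_measurable_integral hfin2 hmeasb2 hf1m
  have hc1m : Measurable fun t => f2 t (∫ q, f1 t q.1 q.2 ∂(m1 t)) :=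
    hf2m.comp (measurable_id.prodMk hΦ1m)
  have hc2m : Measurable fun t => f2 t (∫ q, f1 t q.1 q.2 ∂(m2 t)) :=
    hf2m.comp (measurable_id.prodMk hΦ2m)
  -- uniform bound for integrals of bounded functions against a flow
  have hΦbnd : ∀ (h : ℝ → ℝ → ℝ → ℝ) (C : ℝ), (∀ t x a, |h t x a| ≤ C) →
      ∀ (mm : ℝ → Measure (ℝ × ℝ)), (∀ t, mm t Set.univ < ⊤) → ∀ t,
      |∫ q, h t q.1 q.2 ∂(mm t)| ≤ C * (mm t Set.univ).toReal := by
    intro h C hC mm hfm t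
    haveI : IsFiniteMeasure (mm t) := ⟨hfm t⟩
    rw [← Real.norm_eq_abs]
    exact norm_integral_le_of_norm_le_const
      (Filter.Eventually.of_forall fun q => by rw [Real.norm_eq_abs]; exact hC t q.1 q.2)
  -- key integrability criterion on [0,T]
  have key_int : ∀ (F c : ℝ → ℝ) (CF Cc : ℝ), Measurable F → Measurable c →
      (∀ t, |F t| ≤ CF * ((m1 t Set.univ).toReal + (m2 t Set.univ).toReal)) →
      (∀ t, |c t| ≤ Cc) →
      IntegrableOn (fun t => F t * c t) (Set.Icc 0 T) := by
    intro F c CF Cc hFm hcm hFb hcb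
    refine Integrable.mono' ((hint1.add hint2).const_mul (CF * Cc))
      ((hFm.mul hcm).aestronglyMeasurable) ?_
    filter_upwards with t
    rw [Real.norm_eq_abs, abs_mul]
    have h1 : 0 ≤ CF * ((m1 t Set.univ).toReal + (m2 t Set.univ).toReal) :=
      le_trans (abs_nonneg _) (hFb t)
    calc |F t| * |c t| ≤ (CF * ((m1 t Set.univ).toReal + (m2 t Set.univ).toReal)) * Cc :=
          mul_le_mul (hFb t) (hcb t) (abs_nonneg _) h1
      _ = CF * Cc * ((m1 t Set.univ).toReal + (m2 t Set.univ).toReal) := by ring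
  have hΦ1b : ∀ t, |∫ q, f1 t q.1 q.2 ∂(m1 t)|
      ≤ C1 * ((m1 t Set.univ).toReal + (m2 t Set.univ).toReal) := fun t =>
    le_trans (hΦbnd f1 C1 hC1 m1 hfin1 t) (mul_le_mul_of_nonneg_left (hmassle1 t) hC1nn)
  have hΦ2b : ∀ t, |∫ q, f1 t q.1 q.2 ∂(m2 t)|
      ≤ C1 * ((m1 t Set.univ).toReal + (m2 t Set.univ).toReal) := fun t =>
    le_trans (hΦbnd f1 C1 hC1 m2 hfin2 t) (mul_le_mul_of_nonneg_left (hmassle2 t) hC1nn)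
  -- decomposition of Gamma12
  have hdec : ∀ (μa μc : Measure (ℝ × ℝ)) (ma mc : ℝ → Measure (ℝ × ℝ)),
      IsFiniteMeasure μc →
      Measurable (fun t => ∫ q, f1 t q.1 q.2 ∂(ma t)) →
      (∀ t, mc t Set.univ < ⊤) →
      (∀ B : Set (ℝ × ℝ), MeasurableSet B → Measurable fun t => mc t B) →
      (∀ t, (mc t Set.univ).toReal ≤ (m1 t Set.univ).toReal + (m2 t Set.univ).toReal) →
      Gamma12 T f1 f3 f2 g1 g3 g2 μa ma μc mc
        = (∫ t in Set.Icc 0 T,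
              (∫ q, f1 t q.1 q.2 ∂(mc t)) * f2 t (∫ q, f1 t q.1 q.2 ∂(ma t)))
          + (∫ t in Set.Icc 0 T, ∫ p, f3 t p.1 p.2 ∂(mc t))
          + ((∫ q, g1 q.1 q.2 ∂μc) * g2 (∫ q, g1 q.1 q.2 ∂μa) + ∫ p, g3 p.1 p.2 ∂μc) := by
    intro μa μc ma mc hμcf hΦam hfinc hmeasc hmle
    haveI := hμcf
    have hΦcm : Measurable fun t => ∫ q, f1 t q.1 q.2 ∂(mc t) :=
      flow_measurable_integral hfinc hmeasc hf1m
    have hHcm : Measurable fun t => ∫ p, f3 t p.1 p.2 ∂(mc t) :=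
      flow_measurable_integral hfinc hmeasc hf3m
    have hΦcb : ∀ t, |∫ q, f1 t q.1 q.2 ∂(mc t)|
        ≤ C1 * ((m1 t Set.univ).toReal + (m2 t Set.univ).toReal) := fun t =>
      le_trans (hΦbnd f1 C1 hC1 mc hfinc t) (mul_le_mul_of_nonneg_left (hmle t) hC1nn)
    have hHcb : ∀ t, |∫ p, f3 t p.1 p.2 ∂(mc t)|
        ≤ C3 * ((m1 t Set.univ).toReal + (m2 t Set.univ).toReal) := fun t =>
      le_trans (hΦbnd f3 C3 hC3 mc hfinc t) (mul_le_mul_of_nonneg_left (hmle t) hC3nn)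
    have hA : IntegrableOn (fun t =>
        (∫ q, f1 t q.1 q.2 ∂(mc t)) * f2 t (∫ q, f1 t q.1 q.2 ∂(ma t))) (Set.Icc 0 T) :=
      key_int _ _ C1 C2 hΦcm (hf2m.comp (measurable_id.prodMk hΦam)) hΦcb (fun t => hC2 t _)
    have hB : IntegrableOn (fun t => ∫ p, f3 t p.1 p.2 ∂(mc t)) (Set.Icc 0 T) := by
      have := key_int _ (fun _ => (1 : ℝ)) C3 1 hHcm measurable_const hHcb
        (fun t => by norm_num)
      simpa using this
    have hgpart : ∫ p, (g1 p.1 p.2 * g2 (∫ q, g1 q.1 q.2 ∂μa) + g3 p.1 p.2) ∂μc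
        = (∫ q, g1 q.1 q.2 ∂μc) * g2 (∫ q, g1 q.1 q.2 ∂μa) + ∫ p, g3 p.1 p.2 ∂μc := by
      have hg1i : Integrable (fun p : ℝ × ℝ => g1 p.1 p.2) μc :=
        integrable_of_bdd hg1m.aestronglyMeasurable (fun p => hD1 p.1 p.2)
      have hg3i : Integrable (fun p : ℝ × ℝ => g3 p.1 p.2) μc :=
        integrable_of_bdd hg3m.aestronglyMeasurable (fun p => hD3 p.1 p.2)
      rw [integral_add (hg1i.mul_const _) hg3i, integral_mul_const]
    have hinner : ∀ t : ℝ,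
        (∫ p, (f1 t p.1 p.2 * f2 t (∫ q, f1 t q.1 q.2 ∂(ma t)) + f3 t p.1 p.2) ∂(mc t))
        = (∫ q, f1 t q.1 q.2 ∂(mc t)) * f2 t (∫ q, f1 t q.1 q.2 ∂(ma t))
          + ∫ p, f3 t p.1 p.2 ∂(mc t) := by
      intro t
      haveI : IsFiniteMeasure (mc t) := ⟨hfinc t⟩
      have h1 : Integrable (fun p : ℝ × ℝ => f1 t p.1 p.2) (mc t) :=
        integrable_of_bdd
          (hf1m.comp (measurable_const.prodMk measurable_id)).aestronglyMeasurable
          (fun p => hC1 t p.1 p.2)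
      have h3 : Integrable (fun p : ℝ × ℝ => f3 t p.1 p.2) (mc t) :=
        integrable_of_bdd
          (hf3m.comp (measurable_const.prodMk measurable_id)).aestronglyMeasurable
          (fun p => hC3 t p.1 p.2)
      rw [integral_add (h1.mul_const _) h3, integral_mul_const]
    simp only [Gamma12, hinner]
    rw [integral_add hA hB, hgpart]
  have d11 := hdec μ1 μ1 m1 m1 inferInstance hΦ1m hfin1 hmeasb1 hmassle1
  have d12 := hdec μ1 μ2 m1 m2 inferInstance hΦ1m hfin2 hmeasb2 hmassle2
  have d21 := hdec μ2 μ1 m2 m1 inferInstance hΦ2m hfin1 hmeasb1 hmassle1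
  have d22 := hdec μ2 μ2 m2 m2 inferInstance hΦ2m hfin2 hmeasb2 hmassle2
  have n1 := hNash1 μ2 m2 hR2
  have n2 := hNash2 μ1 m1 hR1
  rw [d12, d11] at n1
  rw [d21, d22] at n2
  -- the four products are integrable
  have k11 : IntegrableOn (fun t =>
      (∫ q, f1 t q.1 q.2 ∂(m1 t)) * f2 t (∫ q, f1 t q.1 q.2 ∂(m1 t))) (Set.Icc 0 T) :=
    key_int _ _ C1 C2 hΦ1m hc1m hΦ1b (fun t => hC2 t _)
  have k12 : IntegrableOn (fun t =>
      (∫ q, f1 t q.1 q.2 ∂(m1 t)) * f2 t (∫ q, f1 t q.1 q.2 ∂(m2 t))) (Set.Icc 0 T) :=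
    key_int _ _ C1 C2 hΦ1m hc2m hΦ1b (fun t => hC2 t _)
  have k21 : IntegrableOn (fun t =>
      (∫ q, f1 t q.1 q.2 ∂(m2 t)) * f2 t (∫ q, f1 t q.1 q.2 ∂(m1 t))) (Set.Icc 0 T) :=
    key_int _ _ C1 C2 hΦ2m hc1m hΦ2b (fun t => hC2 t _)
  have k22 : IntegrableOn (fun t =>
      (∫ q, f1 t q.1 q.2 ∂(m2 t)) * f2 t (∫ q, f1 t q.1 q.2 ∂(m2 t))) (Set.Icc 0 T) :=
    key_int _ _ C1 C2 hΦ2m hc2m hΦ2b (fun t => hC2 t _)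
  -- φ t := (Φ1 t - Φ2 t) * (c2 t - c1 t) ≥ 0, integrable
  have kφ : IntegrableOn (fun t =>
      ((∫ q, f1 t q.1 q.2 ∂(m1 t)) - ∫ q, f1 t q.1 q.2 ∂(m2 t))
        * (f2 t (∫ q, f1 t q.1 q.2 ∂(m2 t)) - f2 t (∫ q, f1 t q.1 q.2 ∂(m1 t))))
      (Set.Icc 0 T) := by
    refine key_int _ _ (2 * C1) (2 * C2) (hΦ1m.sub hΦ2m) (hc2m.sub hc1m) (fun t => ?_)
      (fun t => ?_)
    · calc |(∫ q, f1 t q.1 q.2 ∂(m1 t)) - ∫ q, f1 t q.1 q.2 ∂(m2 t)|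
          ≤ |∫ q, f1 t q.1 q.2 ∂(m1 t)| + |∫ q, f1 t q.1 q.2 ∂(m2 t)| := abs_sub _ _
        _ ≤ 2 * C1 * ((m1 t Set.univ).toReal + (m2 t Set.univ).toReal) := by
            have := hΦ1b t; have := hΦ2b t; linarith
    · calc |f2 t (∫ q, f1 t q.1 q.2 ∂(m2 t)) - f2 t (∫ q, f1 t q.1 q.2 ∂(m1 t))|
          ≤ |f2 t (∫ q, f1 t q.1 q.2 ∂(m2 t))| + |f2 t (∫ q, f1 t q.1 q.2 ∂(m1 t))| :=
            abs_sub _ _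
        _ ≤ 2 * C2 := by have := hC2 t (∫ q, f1 t q.1 q.2 ∂(m2 t));
                         have := hC2 t (∫ q, f1 t q.1 q.2 ∂(m1 t)); linarith
  have hφ0 : ∀ t, 0 ≤ ((∫ q, f1 t q.1 q.2 ∂(m1 t)) - ∫ q, f1 t q.1 q.2 ∂(m2 t))
      * (f2 t (∫ q, f1 t q.1 q.2 ∂(m2 t)) - f2 t (∫ q, f1 t q.1 q.2 ∂(m1 t))) := by
    intro t
    rcases le_total (∫ q, f1 t q.1 q.2 ∂(m1 t)) (∫ q, f1 t q.1 q.2 ∂(m2 t)) with h | h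
    · have h2 := hf2mono t h
      have := mul_nonneg (sub_nonneg.2 h) (sub_nonneg.2 h2)
      nlinarith [this]
    · have h2 := hf2mono t h
      exact mul_nonneg (sub_nonneg.2 h) (sub_nonneg.2 h2)
  -- splitting the integral of φ
  have s5 : (∫ t in Set.Icc 0 T,
        ((∫ q, f1 t q.1 q.2 ∂(m1 t)) * f2 t (∫ q, f1 t q.1 q.2 ∂(m2 t))
          + (∫ q, f1 t q.1 q.2 ∂(m2 t)) * f2 t (∫ q, f1 t q.1 q.2 ∂(m1 t))))
      = (∫ t in Set.Icc 0 T,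
          (∫ q, f1 t q.1 q.2 ∂(m1 t)) * f2 t (∫ q, f1 t q.1 q.2 ∂(m2 t)))
        + ∫ t in Set.Icc 0 T,
            (∫ q, f1 t q.1 q.2 ∂(m2 t)) * f2 t (∫ q, f1 t q.1 q.2 ∂(m1 t)) :=
    integral_add k12 k21
  have s4 : (∫ t in Set.Icc 0 T,
        ((∫ q, f1 t q.1 q.2 ∂(m1 t)) * f2 t (∫ q, f1 t q.1 q.2 ∂(m2 t))
          + (∫ q, f1 t q.1 q.2 ∂(m2 t)) * f2 t (∫ q, f1 t q.1 q.2 ∂(m1 t))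
          - (∫ q, f1 t q.1 q.2 ∂(m1 t)) * f2 t (∫ q, f1 t q.1 q.2 ∂(m1 t))))
      = (∫ t in Set.Icc 0 T,
          ((∫ q, f1 t q.1 q.2 ∂(m1 t)) * f2 t (∫ q, f1 t q.1 q.2 ∂(m2 t))
            + (∫ q, f1 t q.1 q.2 ∂(m2 t)) * f2 t (∫ q, f1 t q.1 q.2 ∂(m1 t))))
        - ∫ t in Set.Icc 0 T,
            (∫ q, f1 t q.1 q.2 ∂(m1 t)) * f2 t (∫ q, f1 t q.1 q.2 ∂(m1 t)) :=
    integral_sub (k12.add k21) k11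
  have s3 : (∫ t in Set.Icc 0 T,
        ((∫ q, f1 t q.1 q.2 ∂(m1 t)) * f2 t (∫ q, f1 t q.1 q.2 ∂(m2 t))
          + (∫ q, f1 t q.1 q.2 ∂(m2 t)) * f2 t (∫ q, f1 t q.1 q.2 ∂(m1 t))
          - (∫ q, f1 t q.1 q.2 ∂(m1 t)) * f2 t (∫ q, f1 t q.1 q.2 ∂(m1 t))
          - (∫ q, f1 t q.1 q.2 ∂(m2 t)) * f2 t (∫ q, f1 t q.1 q.2 ∂(m2 t))))
      = (∫ t in Set.Icc 0 T,
          ((∫ q, f1 t q.1 q.2 ∂(m1 t)) * f2 t (∫ q, f1 t q.1 q.2 ∂(m2 t))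
            + (∫ q, f1 t q.1 q.2 ∂(m2 t)) * f2 t (∫ q, f1 t q.1 q.2 ∂(m1 t))
            - (∫ q, f1 t q.1 q.2 ∂(m1 t)) * f2 t (∫ q, f1 t q.1 q.2 ∂(m1 t))))
        - ∫ t in Set.Icc 0 T,
            (∫ q, f1 t q.1 q.2 ∂(m2 t)) * f2 t (∫ q, f1 t q.1 q.2 ∂(m2 t)) :=
    integral_sub ((k12.add k21).sub k11) k22
  have hsplit : (∫ t in Set.Icc 0 T,
        ((∫ q, f1 t q.1 q.2 ∂(m1 t)) - ∫ q, f1 t q.1 q.2 ∂(m2 t))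
          * (f2 t (∫ q, f1 t q.1 q.2 ∂(m2 t)) - f2 t (∫ q, f1 t q.1 q.2 ∂(m1 t))))
      = ((∫ t in Set.Icc 0 T,
            (∫ q, f1 t q.1 q.2 ∂(m1 t)) * f2 t (∫ q, f1 t q.1 q.2 ∂(m2 t)))
          + ∫ t in Set.Icc 0 T,
              (∫ q, f1 t q.1 q.2 ∂(m2 t)) * f2 t (∫ q, f1 t q.1 q.2 ∂(m1 t)))
        - (∫ t in Set.Icc 0 T,
            (∫ q, f1 t q.1 q.2 ∂(m1 t)) * f2 t (∫ q, f1 t q.1 q.2 ∂(m1 t)))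
        - ∫ t in Set.Icc 0 T,
            (∫ q, f1 t q.1 q.2 ∂(m2 t)) * f2 t (∫ q, f1 t q.1 q.2 ∂(m2 t)) := by
    have e : (fun t =>
        ((∫ q, f1 t q.1 q.2 ∂(m1 t)) - ∫ q, f1 t q.1 q.2 ∂(m2 t))
          * (f2 t (∫ q, f1 t q.1 q.2 ∂(m2 t)) - f2 t (∫ q, f1 t q.1 q.2 ∂(m1 t))))
        = fun t =>
        ((∫ q, f1 t q.1 q.2 ∂(m1 t)) * f2 t (∫ q, f1 t q.1 q.2 ∂(m2 t))
          + (∫ q, f1 t q.1 q.2 ∂(m2 t)) * f2 t (∫ q, f1 t q.1 q.2 ∂(m1 t))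
          - (∫ q, f1 t q.1 q.2 ∂(m1 t)) * f2 t (∫ q, f1 t q.1 q.2 ∂(m1 t))
          - (∫ q, f1 t q.1 q.2 ∂(m2 t)) * f2 t (∫ q, f1 t q.1 q.2 ∂(m2 t))) :=
      funext fun t => by ring
    rw [e, s3, s4, s5]
  -- nonnegativity and the Nash inequality give ∫ φ = 0 and the g-term vanishes
  have hInn : 0 ≤ ∫ t in Set.Icc 0 T,
      ((∫ q, f1 t q.1 q.2 ∂(m1 t)) - ∫ q, f1 t q.1 q.2 ∂(m2 t))
        * (f2 t (∫ q, f1 t q.1 q.2 ∂(m2 t)) - f2 t (∫ q, f1 t q.1 q.2 ∂(m1 t))) :=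
    integral_nonneg hφ0
  have hEexp : ((∫ q, g1 q.1 q.2 ∂μ1) - ∫ q, g1 q.1 q.2 ∂μ2)
        * (g2 (∫ q, g1 q.1 q.2 ∂μ1) - g2 (∫ q, g1 q.1 q.2 ∂μ2))
      = (∫ q, g1 q.1 q.2 ∂μ1) * g2 (∫ q, g1 q.1 q.2 ∂μ1)
        + (∫ q, g1 q.1 q.2 ∂μ2) * g2 (∫ q, g1 q.1 q.2 ∂μ2)
        - (∫ q, g1 q.1 q.2 ∂μ2) * g2 (∫ q, g1 q.1 q.2 ∂μ1)
        - (∫ q, g1 q.1 q.2 ∂μ1) * g2 (∫ q, g1 q.1 q.2 ∂μ2) := by ring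
  have hE : ((∫ q, g1 q.1 q.2 ∂μ1) - ∫ q, g1 q.1 q.2 ∂μ2)
      * (g2 (∫ q, g1 q.1 q.2 ∂μ1) - g2 (∫ q, g1 q.1 q.2 ∂μ2)) ≤ 0 := by
    rcases le_total (∫ q, g1 q.1 q.2 ∂μ1) (∫ q, g1 q.1 q.2 ∂μ2) with h | h
    · exact mul_nonpos_iff.2 (Or.inr ⟨sub_nonpos.2 h, sub_nonneg.2 (hg2mono h)⟩)
    · exact mul_nonpos_iff.2 (Or.inl ⟨sub_nonneg.2 h, sub_nonpos.2 (hg2mono h)⟩)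
  have hφE : (∫ t in Set.Icc 0 T,
      ((∫ q, f1 t q.1 q.2 ∂(m1 t)) - ∫ q, f1 t q.1 q.2 ∂(m2 t))
        * (f2 t (∫ q, f1 t q.1 q.2 ∂(m2 t)) - f2 t (∫ q, f1 t q.1 q.2 ∂(m1 t))))
      ≤ ((∫ q, g1 q.1 q.2 ∂μ1) - ∫ q, g1 q.1 q.2 ∂μ2)
        * (g2 (∫ q, g1 q.1 q.2 ∂μ1) - g2 (∫ q, g1 q.1 q.2 ∂μ2)) := by
    rw [hsplit, hEexp]; linarith [n1, n2]
  have hintzero : (∫ t in Set.Icc 0 T,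
      ((∫ q, f1 t q.1 q.2 ∂(m1 t)) - ∫ q, f1 t q.1 q.2 ∂(m2 t))
        * (f2 t (∫ q, f1 t q.1 q.2 ∂(m2 t)) - f2 t (∫ q, f1 t q.1 q.2 ∂(m1 t)))) = 0 :=
    le_antisymm (le_trans hφE hE) hInn
  have hEzero : ((∫ q, g1 q.1 q.2 ∂μ1) - ∫ q, g1 q.1 q.2 ∂μ2)
      * (g2 (∫ q, g1 q.1 q.2 ∂μ1) - g2 (∫ q, g1 q.1 q.2 ∂μ2)) = 0 :=
    le_antisymm hE (le_trans hInn hφE)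
  have haec : ∀ᵐ t ∂(volume.restrict (Set.Icc 0 T)),
      ((∫ q, f1 t q.1 q.2 ∂(m1 t)) - ∫ q, f1 t q.1 q.2 ∂(m2 t))
        * (f2 t (∫ q, f1 t q.1 q.2 ∂(m2 t)) - f2 t (∫ q, f1 t q.1 q.2 ∂(m1 t))) = 0 := by
    have := (integral_eq_zero_iff_of_nonneg hφ0 kφ).1 hintzero
    filter_upwards [this] with t ht using ht
  have part1 : ∀ᵐ t ∂(volume.restrict (Set.Icc 0 T)),
      f2 t (∫ q, f1 t q.1 q.2 ∂(m1 t)) = f2 t (∫ q, f1 t q.1 q.2 ∂(m2 t)) := by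
    filter_upwards [haec] with t ht
    rcases mul_eq_zero.1 ht with h | h
    · rw [sub_eq_zero] at h; rw [h]
    · rw [sub_eq_zero] at h; exact h.symm
  have part2 : g2 (∫ q, g1 q.1 q.2 ∂μ1) = g2 (∫ q, g1 q.1 q.2 ∂μ2) := by
    rcases mul_eq_zero.1 hEzero with h | h
    · rw [sub_eq_zero] at h; rw [h]
    · rw [sub_eq_zero] at h; exact h
  refine ⟨part1, part2, ?_⟩
  have hI12eq : (∫ t in Set.Icc 0 T,
        (∫ q, f1 t q.1 q.2 ∂(m2 t)) * f2 t (∫ q, f1 t q.1 q.2 ∂(m1 t)))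
      = ∫ t in Set.Icc 0 T,
          (∫ q, f1 t q.1 q.2 ∂(m2 t)) * f2 t (∫ q, f1 t q.1 q.2 ∂(m2 t)) := by
    apply integral_congr_ae
    filter_upwards [part1] with t ht
    rw [ht]
  have hI21eq : (∫ t in Set.Icc 0 T,
        (∫ q, f1 t q.1 q.2 ∂(m1 t)) * f2 t (∫ q, f1 t q.1 q.2 ∂(m2 t)))
      = ∫ t in Set.Icc 0 T,
          (∫ q, f1 t q.1 q.2 ∂(m1 t)) * f2 t (∫ q, f1 t q.1 q.2 ∂(m1 t)) := by
    apply integral_congr_ae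
    filter_upwards [part1] with t ht
    rw [ht]
  have e1 : Gamma12 T f1 f3 f2 g1 g3 g2 μ1 m1 μ2 m2
      = Gamma12 T f1 f3 f2 g1 g3 g2 μ2 m2 μ2 m2 := by
    rw [d12, d22, hI12eq, part2]
  have e2 : Gamma12 T f1 f3 f2 g1 g3 g2 μ2 m2 μ1 m1
      = Gamma12 T f1 f3 f2 g1 g3 g2 μ1 m1 μ1 m1 := by
    rw [d21, d11, hI21eq, ← part2]
  have q1 := hNash1 μ2 m2 hR2
  have q2 := hNash2 μ1 m1 hR1
  rw [e1] at q1
  rw [e2] at q2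
  linarith
end
end
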